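/- For a real parameter c > 1, define μ₁(c) = ∫₀¹ (1/(π√(p(1−p)))) · [ p²·(1 + (1−p)/(c·p))·ln(1 + (1−p)/(c·p)) + 2p(1−p)·(1 − 1/c)·ln(1 − 1/c) + (1−p)²·(1 + p/(c·(1−p)))·ln(1 + p/(c·(1−p))) ] dp. Then lim_{c→∞} c²·μ₁(c) = 1/2. -/

import Mathlib

/-!
Write `klFun x = x log x + 1 - x` for the Kullback–Leibler generator. Since the linear parts
`p² · (1-p)/(cp) - 2p(1-p)/c + (1-p)² · p/(c(1-p))` cancel, the integrand's bracket is
`p² klFun (1 + (1-p)/(pc)) + 2p(1-p) klFun (1 - 1/c) + (1-p)² klFun (1 + p/((1-p)c))`.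
As `klFun (1 + t) ∼ t²/2` and `0 ≤ klFun (1 + t) ≤ t²`, the bracket times `c²` stays in `[0, 1]`
and tends pointwise to `((1-p)² + 2p(1-p) + p²)/2 = 1/2`. Dominated convergence against the
arcsine density, of total mass `1`, gives the limit `1/2`.
-/

open Filter MeasureTheory intervalIntegral

/-- The expected per-segment score `μ₁(c)` of a guilty user under the arcsine bias
distribution, the interleaving attack by `c` colluders, and the interleaving
log-likelihood decoder. -/
noncomputable def mu1 (c : ℝ) : ℝ :=
  ∫ p in (0:ℝ)..1, (1 / (Real.pi * Real.sqrt (p * (1 - p)))) *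
    (p ^ 2 * (1 + (1 - p) / (c * p)) * Real.log (1 + (1 - p) / (c * p))
      + 2 * p * (1 - p) * (1 - 1 / c) * Real.log (1 - 1 / c)
      + (1 - p) ^ 2 * (1 + p / (c * (1 - p))) * Real.log (1 + p / (c * (1 - p))))

open Set Real Topology Interval InformationTheory

theorem klFun_le_sq_sub_one {x : ℝ} (hx : 0 < x) : klFun x ≤ (x - 1) ^ 2 := by
  have hlog : log x ≤ x - 1 := log_le_sub_one_of_pos hx
  have := mul_le_mul_of_nonneg_left hlog hx.le
  rw [klFun_apply]
  nlinarith

theorem tendsto_klFun_div_sq_sub_one :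
    Tendsto (fun x => klFun x / (x - 1) ^ 2) (𝓝[≠] 1) (𝓝 (1 / 2)) := by
  have hslope : Tendsto (fun x => log x / (x - 1)) (𝓝[≠] 1) (𝓝 1) := by
    have h := hasDerivAt_iff_tendsto_slope.mp (hasDerivAt_log one_ne_zero)
    rw [inv_one] at h
    refine h.congr fun x => ?_
    rw [slope_def_field, log_one, sub_zero]
  have hsq : Continuous fun x : ℝ => (x - 1) ^ 2 := by fun_prop
  refine HasDerivAt.lhopital_zero_nhdsNE (f' := log) (g' := fun x => 2 * (x - 1)) ?_ ?_ ?_ ?_ ?_ ?_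
  · filter_upwards [eventually_ne_nhdsWithin one_ne_zero] with x hx
    exact hasDerivAt_klFun hx
  · filter_upwards with x
    simpa using ((hasDerivAt_id x).sub_const 1).fun_pow 2
  · filter_upwards [self_mem_nhdsWithin] with x hx
    exact mul_ne_zero two_ne_zero (sub_ne_zero.mpr hx)
  · exact tendsto_nhdsWithin_of_tendsto_nhds (klFun_one ▸ continuous_klFun.tendsto 1)
  · exact tendsto_nhdsWithin_of_tendsto_nhds (by simpa using hsq.tendsto 1)
  · refine (hslope.div_const 2).congr fun x => ?_
    rw [div_div, mul_comm]

theorem tendsto_sq_mul_klFun_one_add_div (a : ℝ) :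
    Tendsto (fun c : ℝ => c ^ 2 * klFun (1 + a / c)) atTop (𝓝 (a ^ 2 / 2)) := by
  rcases eq_or_ne a 0 with rfl | ha
  · simp [klFun_one]
  have hx : Tendsto (fun c : ℝ => 1 + a / c) atTop (𝓝[≠] 1) := by
    refine tendsto_nhdsWithin_iff.mpr ⟨?_, ?_⟩
    · simpa using (tendsto_const_nhds.div_atTop tendsto_id).const_add (1 : ℝ)
    · filter_upwards [eventually_gt_atTop 0] with c hc
      simpa using div_ne_zero ha hc.ne'
  have h := (tendsto_klFun_div_sq_sub_one.comp hx).const_mul (a ^ 2)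
  rw [mul_one_div] at h
  refine h.congr' ?_
  filter_upwards [eventually_gt_atTop 0] with c hc
  simp only [Function.comp_apply, add_sub_cancel_left]
  field_simp

theorem sq_mul_klFun_one_add_div_le {a c : ℝ} (hc : 0 < c) (hac : 0 < 1 + a / c) :
    c ^ 2 * klFun (1 + a / c) ≤ a ^ 2 :=
  calc c ^ 2 * klFun (1 + a / c) ≤ c ^ 2 * (a / c) ^ 2 := by
        simpa using mul_le_mul_of_nonneg_left (klFun_le_sq_sub_one hac) (sq_nonneg c)
    _ = a ^ 2 := by field_simp

theorem tendsto_integral_mul_of_norm_le_one {ι : Type*} {l : Filter ι} [l.IsCountablyGenerated]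
    {w : ℝ → ℝ} {F : ι → ℝ → ℝ} {a b L : ℝ} (hab : a ≤ b) (hw : IntervalIntegrable w volume a b)
    (hF_meas : ∀ᶠ i in l, AEStronglyMeasurable (F i) (volume.restrict (Ioc a b)))
    (hF_le : ∀ᶠ i in l, ∀ x ∈ Ioo a b, ‖F i x‖ ≤ 1)
    (hF_lim : ∀ x ∈ Ioo a b, Tendsto (F · x) l (𝓝 L)) :
    Tendsto (fun i => ∫ x in a..b, w x * F i x) l (𝓝 ((∫ x in a..b, w x) * L)) := by
  rw [← intervalIntegral.integral_mul_const]
  have hIoo : ∀ᵐ x, x ∈ Ι a b → x ∈ Ioo a b := by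
    filter_upwards [Measure.ae_ne volume b] with x hxb hx
    rw [uIoc_of_le hab] at hx
    exact ⟨hx.1, lt_of_le_of_ne hx.2 hxb⟩
  refine tendsto_integral_filter_of_dominated_convergence (fun x => ‖w x‖) ?_ ?_ hw.norm ?_
  · filter_upwards [hF_meas] with i hi
    rw [uIoc_of_le hab]
    exact hw.1.aestronglyMeasurable.mul hi
  · filter_upwards [hF_le] with i hi
    filter_upwards [hIoo] with x hx hxab
    simpa [norm_mul] using mul_le_mul_of_nonneg_left (hi x (hx hxab)) (norm_nonneg (w x))
  · filter_upwards [hIoo] with x hx hxab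
    exact (hF_lim x (hx hxab)).const_mul (w x)

noncomputable def arcsineDensity (p : ℝ) : ℝ := 1 / (π * √(p * (1 - p)))

theorem hasDerivAt_arcsin_two_mul_sub_one_div_pi {p : ℝ} (hp : p ∈ Ioo 0 1) :
    HasDerivAt (fun p => arcsin (2 * p - 1) / π) (arcsineDensity p) p := by
  obtain ⟨hp0, hp1⟩ := hp
  have hinner : HasDerivAt (fun p : ℝ => 2 * p - 1) 2 p := by
    simpa using ((hasDerivAt_id p).const_mul 2).sub_const 1
  have h := ((hasDerivAt_arcsin (by linarith) (by linarith)).comp p hinner).div_const π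
  refine h.congr_deriv ?_
  have hsq : 1 - (2 * p - 1) ^ 2 = 2 ^ 2 * (p * (1 - p)) := by ring
  rw [hsq, sqrt_mul (by norm_num), sqrt_sq (by norm_num), arcsineDensity]
  have : 0 < √(p * (1 - p)) := sqrt_pos.mpr (by nlinarith)
  field_simp

theorem arcsineDensity_nonneg (p : ℝ) : 0 ≤ arcsineDensity p := by
  unfold arcsineDensity; positivity

theorem intervalIntegrable_arcsineDensity : IntervalIntegrable arcsineDensity volume 0 1 := by
  refine intervalIntegrable_deriv_of_nonneg (g := fun p => arcsin (2 * p - 1) / π) (by fun_prop)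
    (fun p hp => ?_) (fun p _ => arcsineDensity_nonneg p)
  simp only [zero_le_one, min_eq_left, max_eq_right] at hp
  exact hasDerivAt_arcsin_two_mul_sub_one_div_pi hp

theorem integral_arcsineDensity : ∫ p in (0 : ℝ)..1, arcsineDensity p = 1 := by
  rw [integral_eq_sub_of_hasDerivAt_of_le zero_le_one (by fun_prop)
    (fun p hp => hasDerivAt_arcsin_two_mul_sub_one_div_pi hp) intervalIntegrable_arcsineDensity]
  field_simp
  norm_num [arcsin_one, arcsin_neg_one]

noncomputable def guiltyScore (c p : ℝ) : ℝ :=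
  p ^ 2 * (1 + (1 - p) / (c * p)) * log (1 + (1 - p) / (c * p))
    + 2 * p * (1 - p) * (1 - 1 / c) * log (1 - 1 / c)
    + (1 - p) ^ 2 * (1 + p / (c * (1 - p))) * log (1 + p / (c * (1 - p)))

theorem mu1_eq_integral_arcsineDensity_mul (c : ℝ) :
    mu1 c = ∫ p in (0 : ℝ)..1, arcsineDensity p * guiltyScore c p := rfl

theorem guiltyScore_eq_klFun {c p : ℝ} (hc : c ≠ 0) (hp0 : p ≠ 0) (hp1 : 1 - p ≠ 0) :
    guiltyScore c p = p ^ 2 * klFun (1 + (1 - p) / p / c)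
      + 2 * p * (1 - p) * klFun (1 + -1 / c) + (1 - p) ^ 2 * klFun (1 + p / (1 - p) / c) := by
  rw [div_div, div_div, mul_comm p c, mul_comm (1 - p) c, neg_div, ← sub_eq_add_neg]
  simp only [guiltyScore, klFun_apply]
  field_simp
  ring

theorem measurable_guiltyScore (c : ℝ) : Measurable (guiltyScore c) := by
  unfold guiltyScore; fun_prop

theorem sq_mul_guiltyScore_eq {c p : ℝ} (hc : c ≠ 0) (hp : p ∈ Ioo 0 1) :
    c ^ 2 * guiltyScore c p = p ^ 2 * (c ^ 2 * klFun (1 + (1 - p) / p / c))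
      + 2 * p * (1 - p) * (c ^ 2 * klFun (1 + -1 / c))
      + (1 - p) ^ 2 * (c ^ 2 * klFun (1 + p / (1 - p) / c)) := by
  rw [guiltyScore_eq_klFun hc hp.1.ne' (sub_ne_zero.mpr hp.2.ne')]
  ring

theorem sq_mul_div_sq_sum_eq_one {p : ℝ} (hp : p ∈ Ioo 0 1) :
    p ^ 2 * ((1 - p) / p) ^ 2 + 2 * p * (1 - p) * (-1) ^ 2 + (1 - p) ^ 2 * (p / (1 - p)) ^ 2
      = 1 := by
  have hq : 1 - p ≠ 0 := sub_ne_zero.mpr hp.2.ne'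
  field_simp [hp.1.ne']
  ring

theorem tendsto_sq_mul_guiltyScore {p : ℝ} (hp : p ∈ Ioo 0 1) :
    Tendsto (fun c => c ^ 2 * guiltyScore c p) atTop (𝓝 (1 / 2)) := by
  have h := (((tendsto_sq_mul_klFun_one_add_div ((1 - p) / p)).const_mul (p ^ 2)).add
    ((tendsto_sq_mul_klFun_one_add_div (-1)).const_mul (2 * p * (1 - p)))).add
    ((tendsto_sq_mul_klFun_one_add_div (p / (1 - p))).const_mul ((1 - p) ^ 2))
  rw [show p ^ 2 * (((1 - p) / p) ^ 2 / 2) + 2 * p * (1 - p) * ((-1) ^ 2 / 2)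
      + (1 - p) ^ 2 * ((p / (1 - p)) ^ 2 / 2) = 1 / 2 by
    linear_combination (1 / 2) * sq_mul_div_sq_sum_eq_one hp] at h
  refine h.congr' ?_
  filter_upwards [eventually_ne_atTop 0] with c hc
  rw [sq_mul_guiltyScore_eq hc hp]

theorem norm_sq_mul_guiltyScore_le_one {c p : ℝ} (hc : 1 < c) (hp : p ∈ Ioo 0 1) :
    ‖c ^ 2 * guiltyScore c p‖ ≤ 1 := by
  have hc0 : 0 < c := by linarith
  have hp0 : 0 < p := hp.1
  have hq : 0 < 1 - p := sub_pos.mpr hp.2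
  have ha : 0 < 1 + (1 - p) / p / c := by positivity
  have hm : 0 < 1 + -1 / c := by rw [neg_div]; linarith [(div_lt_one hc0).mpr hc]
  have hb : 0 < 1 + p / (1 - p) / c := by positivity
  have hS0 : 0 ≤ c ^ 2 * guiltyScore c p := by
    rw [sq_mul_guiltyScore_eq hc0.ne' hp]
    have := klFun_nonneg ha.le
    have := klFun_nonneg hm.le
    have := klFun_nonneg hb.le
    positivity
  have ka := mul_le_mul_of_nonneg_left (sq_mul_klFun_one_add_div_le hc0 ha) (sq_nonneg p)
  have km := mul_le_mul_of_nonneg_left (sq_mul_klFun_one_add_div_le hc0 hm)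
    (by positivity : 0 ≤ 2 * p * (1 - p))
  have kb := mul_le_mul_of_nonneg_left (sq_mul_klFun_one_add_div_le hc0 hb) (sq_nonneg (1 - p))
  rw [Real.norm_of_nonneg hS0, sq_mul_guiltyScore_eq hc0.ne' hp]
  linarith [sq_mul_div_sq_sum_eq_one hp]

/-- The expected per-segment guilty score under the interleaving log-likelihood decoder
satisfies `μ₁(c) ∼ 1/(2c²)`, i.e. `c²·μ₁(c) → 1/2` as `c → ∞`. -/
theorem mu1_asymptotics :
    Tendsto (fun c : ℝ => c ^ 2 * mu1 c) atTop (nhds (1 / 2)) := by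
  have h := tendsto_integral_mul_of_norm_le_one (F := fun c p => c ^ 2 * guiltyScore c p)
    zero_le_one intervalIntegrable_arcsineDensity
    (.of_forall fun c => ((measurable_guiltyScore c).const_mul _).aestronglyMeasurable)
    ((eventually_gt_atTop 1).mono fun c hc p hp => norm_sq_mul_guiltyScore_le_one hc hp)
    (fun p hp => tendsto_sq_mul_guiltyScore hp)
  rw [integral_arcsineDensity, one_mul] at h
  refine h.congr fun c => ?_
  rw [mu1_eq_integral_arcsineDensity_mul, ← intervalIntegral.integral_const_mul]
  simp only [mul_left_comm]
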